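/- arXiv:1908.06200 — 2 statements merged into one kernel-verified Lean document; each statement's English description precedes it below -/
import Mathlib

section
/- Let X be a continuum and p ∈ X. If X \ {p} is connected, then C(X) \ C(p,X) = C(X \ {p}) is connected. -/
open TopologicalSpace Set

/-- The hyperspace of subcontinua of `X`. -/
abbrev Hyp (X : Type*) [MetricSpace X] : Type _ :=
  {A : NonemptyCompacts X // IsConnected (A : Set X)}

variable {X : Type*} [MetricSpace X]

/-- `C(p,X)`, the subcontinua containing `p`, as a subset of `Hyp X`. -/
def CpSet (p : X) : Set (Hyp X) := {A | p ∈ (A.1 : Set X)}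

/-- The setoid collapsing `C(p,X)` to a point. -/
def hsSetoid (p : X) : Setoid (Hyp X) where
  r A B := A = B ∨ (A ∈ CpSet p ∧ B ∈ CpSet p)
  iseqv := by
    constructor
    · intro A; exact Or.inl rfl
    · rintro A B (rfl | h); exacts [Or.inl rfl, Or.inr ⟨h.2, h.1⟩]
    · rintro A B C (rfl | h) (rfl | h')
      exacts [Or.inl rfl, Or.inr h', Or.inr h, Or.inr ⟨h.1, h'.2⟩]

/-- The hyperspace `HS(p,X) = C(X)/C(p,X)`. -/
abbrev HS (p : X) : Type _ := Quotient (hsSetoid p)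

/-- The quotient map `π_p^X`. -/
def hsMk (p : X) : Hyp X → HS p := Quotient.mk (hsSetoid p)

/-- The singleton `{p}` as a subcontinuum. -/
def singHyp (p : X) : Hyp X :=
  ⟨⟨⟨{p}, isCompact_singleton⟩, Set.singleton_nonempty p⟩, isConnected_singleton⟩

/-- The distinguished point `C_p^X` of `HS(p,X)`. -/
def CpPoint (p : X) : HS p := hsMk p (singHyp p)

/-!
Fix `x₀ ≠ p`. Then `C(X \ {p})` is the union, over `A ∈ C(X \ {p})`, of the sets
`{{x} : x ≠ p} ∪ C(A)`; each contains `{x₀}` and is connected as soon as `C(A)` is, because the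
connected set of singletons meets `C(A)` in `{a}` for any `a ∈ A`. The hyperspace `C(A)` of a
continuum `A` is compact, and every `B ∈ C(A)` is joined to `A` by `ε`-chains: the component of
the closed `ε`-neighbourhood of `B` containing `B` is a continuum within Hausdorff distance `ε` of
`B` which, by boundary bumping, is either `A` or reaches distance `ε` from `B`; by compactness of
`A` the second alternative cannot recur forever.
-/

open Metric Relation

section ChainConnected

variable {Z : Type*} [PseudoMetricSpace Z] [CompactSpace Z]

theorem preconnectedSpace_of_forall_reflTransGen_dist_le (z₀ : Z)
    (h : ∀ ε > 0, ∀ z, ReflTransGen (fun a b : Z => dist a b ≤ ε) z z₀) : PreconnectedSpace Z := by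
  suffices key : ∀ t : Set Z, IsClopen t → z₀ ∈ t → t = univ by
    refine preconnectedSpace_iff_clopen.2 fun s hs => ?_
    by_cases hz₀ : z₀ ∈ s
    · exact Or.inr (key s hs hz₀)
    · exact Or.inl (compl_univ_iff.1 (key sᶜ hs.compl hz₀))
  intro t ht hz₀
  obtain ⟨δ, hδ, hδt⟩ := ht.isClosed.isCompact.exists_thickening_subset_open ht.isOpen subset_rfl
  refine eq_univ_of_forall fun z => ?_
  induction h (δ / 2) (half_pos hδ) z using ReflTransGen.head_induction_on with
  | refl => exact hz₀
  | head hab _ hb => exact hδt (mem_thickening_iff.2 ⟨_, hb, hab.trans_lt (half_lt_self hδ)⟩)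

end ChainConnected

section BoundaryBumping

variable {α : Type*} [TopologicalSpace α]

theorem IsClosed.connectedComponentIn {K : Set α} (hK : IsClosed K) (x : α) :
    IsClosed (connectedComponentIn K x) := by
  by_cases hx : x ∈ K
  · rw [connectedComponentIn_eq_image hx]
    exact hK.isClosedEmbedding_subtypeVal.isClosedMap _ isClosed_connectedComponent
  · rw [connectedComponentIn_eq_empty hx]
    exact isClosed_empty

theorem exists_isClopen_mem_disjoint_of_disjoint_connectedComponent [T2Space α] [CompactSpace α]
    {F : Set α} (hF : IsClosed F) {x : α} (h : Disjoint (connectedComponent x) F) :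
    ∃ s, IsClopen s ∧ x ∈ s ∧ Disjoint s F := by
  rw [connectedComponent_eq_iInter_isClopen, disjoint_iff_inter_eq_empty, inter_comm] at h
  obtain ⟨u, hu⟩ := hF.isCompact.elim_finite_subfamily_closed _ (fun s => s.2.1.isClosed) h
  refine ⟨⋂ s ∈ u, s.1, isClopen_biInter_finset fun s _ => s.2.1, mem_iInter₂.2 fun s _ => s.2.2,
    ?_⟩
  rwa [disjoint_iff_inter_eq_empty, inter_comm]

/-- The boundary bumping theorem. -/
theorem connectedComponentIn_inter_frontier_nonempty [T2Space α] [CompactSpace α]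
    [PreconnectedSpace α] {K : Set α} (hK : IsClosed K) (hKu : K ≠ univ) {x : α} (hx : x ∈ K) :
    (connectedComponentIn K x ∩ frontier K).Nonempty := by
  have : CompactSpace K := isCompact_iff_compactSpace.mp hK.isCompact
  by_contra hdisj
  rw [not_nonempty_iff_eq_empty, ← disjoint_iff_inter_eq_empty, connectedComponentIn_eq_image hx]
    at hdisj
  obtain ⟨s, hs, hxs, hsF⟩ := exists_isClopen_mem_disjoint_of_disjoint_connectedComponent
    (isClosed_frontier.preimage continuous_subtype_val)
    ((hdisj.preimage _).mono_left (subset_preimage_image _ _))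
  obtain ⟨V, hV, rfl⟩ := isOpen_induced_iff.mp hs.isOpen
  have hU : ((↑) : K → α) '' ((↑) ⁻¹' V) = interior K ∩ V := by
    rw [Subtype.image_preimage_coe, ← self_sdiff_frontier]
    ext y
    exact ⟨fun ⟨hyK, hyV⟩ => ⟨⟨hyK, disjoint_left.1 hsF (show (⟨y, hyK⟩ : K) ∈ _ from hyV)⟩, hyV⟩,
      fun ⟨⟨hyK, _⟩, hyV⟩ => ⟨hyK, hyV⟩⟩
  have hUclopen : IsClopen (((↑) : K → α) '' ((↑) ⁻¹' V)) :=
    ⟨(hs.isClosed.isCompact.image continuous_subtype_val).isClosed,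
      hU ▸ isOpen_interior.inter hV⟩
  refine hKu (eq_univ_of_univ_subset ?_)
  rw [← hUclopen.eq_univ ⟨x, _, hxs, rfl⟩]
  exact Subtype.coe_image_subset _ _

end BoundaryBumping

theorem TopologicalSpace.NonemptyCompacts.isClosed_setOf_isConnected {α : Type*}
    [TopologicalSpace α] [T2Space α] :
    IsClosed {K : NonemptyCompacts α | IsConnected (K : Set α)} := by
  refine isOpen_compl_iff.mp (isOpen_iff_forall_mem_open.2 fun K hK => ?_)
  obtain ⟨u, v, hu, hv, hKuv, huv, hKu, hKv⟩ : ∃ u v : Set α, IsClosed u ∧ IsClosed v ∧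
      (K : Set α) ⊆ u ∪ v ∧ Disjoint u v ∧ ¬(K : Set α) ⊆ u ∧ ¬(K : Set α) ⊆ v := by
    simpa [IsConnected, K.nonempty,
      isPreconnected_iff_subset_of_fully_disjoint_closed K.isCompact.isClosed] using hK
  obtain ⟨U, V, hU, hV, hKU, hKV, hUV⟩ := SeparatedNhds.of_isCompact_isCompact
    (K.isCompact.inter_right hu) (K.isCompact.inter_right hv)
    (huv.mono inter_subset_right inter_subset_right)
  refine ⟨{L | (L : Set α) ⊆ U ∪ V} ∩ {L | ((L : Set α) ∩ U).Nonempty} ∩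
      {L | ((L : Set α) ∩ V).Nonempty}, ?_, ?_, ?_⟩
  · rintro L ⟨⟨hLUV, hLU⟩, hLV⟩ hL
    rcases hL.isPreconnected.subset_or_subset hU hV hUV hLUV with hLU' | hLV'
    · exact hLV.ne_empty (hUV.mono_left hLU' |>.inter_eq)
    · exact hLU.ne_empty (hUV.symm.mono_left hLV' |>.inter_eq)
  · exact ((NonemptyCompacts.isOpen_subsets_of_isOpen (hU.union hV)).inter
      (NonemptyCompacts.isOpen_inter_nonempty_of_isOpen hU)).inter
      (NonemptyCompacts.isOpen_inter_nonempty_of_isOpen hV)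
  · obtain ⟨x, hxK, hxv⟩ := not_subset.1 hKv
    obtain ⟨y, hyK, hyu⟩ := not_subset.1 hKu
    refine ⟨⟨fun z hz => ?_, x, hxK, hKU ⟨hxK, (hKuv hxK).resolve_right hxv⟩⟩,
      y, hyK, hKV ⟨hyK, (hKuv hyK).resolve_left hyu⟩⟩
    rcases hKuv hz with hzu | hzv
    exacts [Or.inl (hKU ⟨hz, hzu⟩), Or.inr (hKV ⟨hz, hzv⟩)]

section Hyperspace

variable {Y : Type*} [MetricSpace Y] [CompactSpace Y]

instance : CompactSpace (Hyp Y) :=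
  isCompact_iff_compactSpace.mp NonemptyCompacts.isClosed_setOf_isConnected.isCompact

variable (Y) in
def univHyp [ConnectedSpace Y] : Hyp Y :=
  ⟨⟨⟨univ, isCompact_univ⟩, univ_nonempty⟩, isConnected_univ⟩

theorem exists_superset_dist_le [PreconnectedSpace Y] (B : Hyp Y) {ε : ℝ} (hε : 0 ≤ ε) :
    ∃ C : Hyp Y, (B.1 : Set Y) ⊆ C.1 ∧ dist B C ≤ ε ∧
      ((C.1 : Set Y) = univ ∨ ∃ c ∈ (C.1 : Set Y), infDist c B.1 = ε) := by
  obtain ⟨b, hb⟩ := B.1.nonempty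
  set K := {y | infDist y (B.1 : Set Y) ≤ ε}
  have hK : IsClosed K := isClosed_le (continuous_infDist_pt _) continuous_const
  have hBC : (B.1 : Set Y) ⊆ connectedComponentIn K b :=
    B.2.isPreconnected.subset_connectedComponentIn hb fun y hy =>
      (infDist_zero_of_mem hy).trans_le hε
  have hbK : b ∈ K := connectedComponentIn_subset K b (hBC hb)
  let C : Hyp Y := ⟨⟨⟨connectedComponentIn K b, (hK.connectedComponentIn b).isCompact⟩,
    ⟨b, hBC hb⟩⟩, isConnected_connectedComponentIn_iff.2 hbK⟩
  refine ⟨C, hBC, hausdorffDist_le_of_infDist hε (fun y hy => ?_) fun y hy => ?_, ?_⟩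
  · exact (infDist_zero_of_mem (hBC hy)).trans_le hε
  · exact connectedComponentIn_subset K b hy
  by_cases hKu : K = univ
  · left
    change connectedComponentIn K b = univ
    rw [hKu, connectedComponentIn_univ, PreconnectedSpace.connectedComponent_eq_univ]
  · obtain ⟨c, hcC, hcF⟩ := connectedComponentIn_inter_frontier_nonempty hK hKu hbK
    exact Or.inr ⟨c, hcC, frontier_le_subset_eq (continuous_infDist_pt _) continuous_const hcF⟩

/-- Iterating `exists_superset_dist_le` must reach `Y` after finitely many steps: otherwise the
points at distance `ε` added at each step form an infinite `ε`-separated sequence. -/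
theorem reflTransGen_dist_le_univHyp [ConnectedSpace Y] (B : Hyp Y) {ε : ℝ} (hε : 0 < ε) :
    ReflTransGen (fun C D : Hyp Y => dist C D ≤ ε) B (univHyp Y) := by
  choose next hsub hdist hfar using fun C : Hyp Y => exists_superset_dist_le C hε.le
  let g : ℕ → Hyp Y := fun n => Nat.rec B (fun _ => next) n
  by_contra hB
  have hnot (n : ℕ) : ¬ReflTransGen (fun C D : Hyp Y => dist C D ≤ ε) (g n) (univHyp Y) := by
    induction n with
    | zero => exact hB
    | succ n ih => exact fun h => ih (.head (hdist (g n)) h)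
  have hne (n : ℕ) : ((g (n + 1)).1 : Set Y) ≠ univ := fun h =>
    hnot (n + 1) (Subtype.ext (NonemptyCompacts.ext (s := (g (n + 1)).1) (t := (univHyp Y).1) h)
      ▸ .refl)
  choose c hcmem hcdist using fun n => (hfar (g n)).resolve_left (hne n)
  have hmono : Monotone fun n => ((g n).1 : Set Y) := monotone_nat_of_le_succ fun n => hsub (g n)
  have hsep {m n : ℕ} (hmn : m < n) : ε ≤ dist (c n) (c m) :=
    (hcdist n).symm.le.trans (infDist_le_dist_of_mem (hmono hmn (hcmem m)))
  obtain ⟨z, -, φ, hφ, hlim⟩ := isCompact_univ.tendsto_subseq (x := c) fun _ => mem_univ _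
  obtain ⟨N, hN⟩ := Metric.cauchySeq_iff'.1 hlim.cauchySeq ε hε
  exact (hN (N + 1) N.le_succ).not_ge (hsep (hφ N.lt_succ_self))

instance [ConnectedSpace Y] : ConnectedSpace (Hyp Y) where
  toPreconnectedSpace := preconnectedSpace_of_forall_reflTransGen_dist_le (univHyp Y)
    fun _ hε B => reflTransGen_dist_le_univHyp B hε
  toNonempty := ⟨univHyp Y⟩

end Hyperspace

section Subcontinua

variable {Y Z : Type*} [MetricSpace Y] [MetricSpace Z]

def Hyp.map (f : Y → Z) (hf : Continuous f) (B : Hyp Y) : Hyp Z :=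
  ⟨B.1.map f hf, (NonemptyCompacts.coe_map hf B.1).symm ▸ B.2.image f hf.continuousOn⟩

theorem Hyp.continuous_map {f : Y → Z} (hf : Continuous f) : Continuous (Hyp.map f hf) :=
  (hf.nonemptyCompacts_map.comp continuous_subtype_val).subtype_mk _

theorem isPreconnected_setOf_subset {A : Set Y} (hA : IsCompact A) (hAc : IsConnected A) :
    IsPreconnected {B : Hyp Y | (B.1 : Set Y) ⊆ A} := by
  have : CompactSpace A := isCompact_iff_compactSpace.mp hA
  have : ConnectedSpace A := isConnected_iff_connectedSpace.mp hAc
  convert isPreconnected_range (Hyp.continuous_map (continuous_subtype_val (p := (· ∈ A)))) using 1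
  ext B
  refine ⟨fun hB => ?_, fun ⟨C, hC⟩ => hC ▸ Subtype.coe_image_subset _ _⟩
  have himage : ((↑) : A → Y) '' ((↑) ⁻¹' (B.1 : Set Y)) = B.1 := by
    rw [Subtype.image_preimage_coe, inter_eq_right.2 hB]
  have hconn : IsConnected ((↑) ⁻¹' (B.1 : Set Y) : Set A) :=
    ⟨.of_image (by rw [himage]; exact B.1.nonempty),
      Topology.IsInducing.subtypeVal.isPreconnected_image.1 (by rw [himage]; exact B.2.2)⟩
  exact ⟨⟨⟨⟨_, hA.isClosed.isClosedEmbedding_subtypeVal.isCompact_preimage B.1.isCompact⟩,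
    hconn.nonempty⟩, hconn⟩, Subtype.ext (NonemptyCompacts.ext himage)⟩

theorem continuous_singHyp : Continuous (singHyp : Y → Hyp Y) :=
  NonemptyCompacts.continuous_singleton.subtype_mk _

end Subcontinua

theorem stmt6_general (p : X) (h : IsConnected ({p}ᶜ : Set X)) :
    IsConnected ((CpSet p)ᶜ : Set (Hyp X)) := by
  obtain ⟨x₀, hx₀⟩ := h.nonempty
  have hS : singHyp '' {p}ᶜ ⊆ (CpSet p)ᶜ := by
    rintro _ ⟨x, hx, rfl⟩ hpx
    exact hx (mem_singleton_iff.1 hpx).symm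
  refine ⟨⟨_, hS ⟨x₀, hx₀, rfl⟩⟩, isPreconnected_of_forall (singHyp x₀) fun B hB => ?_⟩
  obtain ⟨b, hb⟩ := B.1.nonempty
  refine ⟨singHyp '' {p}ᶜ ∪ {C | (C.1 : Set X) ⊆ B.1},
    union_subset hS fun C hC hpC => hB (hC hpC), .inl ⟨x₀, hx₀, rfl⟩,
    .inr (subset_refl (B.1 : Set X)), ?_⟩
  exact (h.isPreconnected.image _ continuous_singHyp.continuousOn).union (singHyp b)
    ⟨b, fun hbp => hB (hbp ▸ hb), rfl⟩ (singleton_subset_iff.2 hb)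
    (isPreconnected_setOf_subset B.1.isCompact B.2)

theorem stmt6 [CompactSpace X] [ConnectedSpace X] [Nontrivial X] (p : X) (h : IsConnected ({p}ᶜ : Set X)) :
    IsConnected ((CpSet p)ᶜ : Set (Hyp X)) :=
  stmt6_general p h
end

section
/- Let X be a continuum that is colocally connected at p ∈ X. Then HS(p,X) is colocally connected: for every point z ∈ HS(p,X) and open set U containing z, there is an open set V with z ∈ V ⊆ U and HS(p,X) \ V connected. -/
open TopologicalSpace Set

variable {X : Type*} [MetricSpace X]

/-!
Between two nested continua `B ⊆ Z`, the subcontinua `C` with `B ⊆ C ⊆ Z` form a connected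
subset of `C(X)`: otherwise a maximal element (Zorn, using compactness of `C(X)`) of one side of a
separation could be enlarged slightly inside `Z` by boundary bumping. Consequently upper sets of
`C(X)`, and lower sets containing every singleton, are connected.

A small neighbourhood of the point `C(p,X)` of `HS(p,X)` is the image of the continua meeting `W`,
where `W ∋ p` is a small open set with `X \ W` connected; its complement is `C(X \ W)`. A small
neighbourhood of any other point `A` is the image of a small Hausdorff ball around `A` that misses
`C(p,X)`. The complement of that ball is the union of the continua having a point far from `A`
(an upper set) and of those far from some point of `A` (a lower set, which contains every
singleton unless `A` is itself a point, in which case it lies in the upper set).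
-/

open Metric Topology

theorem IsCompact.exists_le_maximal {α : Type*} [TopologicalSpace α] [Preorder α]
    [ClosedIciTopology α] {s : Set α} (hs : IsCompact s) {x : α} (hx : x ∈ s) :
    ∃ m, x ≤ m ∧ Maximal (· ∈ s) m := by
  refine zorn_le_nonempty₀ s (fun c hcs hc y hy => ?_) x hx
  have : Nonempty c := ⟨⟨y, hy⟩⟩
  by_contra! hub
  have hdir : Directed (· ⊇ ·) fun z : c => Ici (z : α) := fun z w =>
    (hc.total z.2 w.2).elim (fun h => ⟨w, Ici_subset_Ici.2 h, subset_rfl⟩)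
      (fun h => ⟨z, subset_rfl, Ici_subset_Ici.2 h⟩)
  obtain ⟨z, hz⟩ := hs.elim_directed_family_closed _ (fun z => isClosed_Ici)
    (eq_empty_of_forall_notMem fun m ⟨hms, hm⟩ =>
      let ⟨w, hwc, hwm⟩ := hub m hms; hwm (mem_iInter.1 hm ⟨w, hwc⟩)) hdir
  exact (eq_empty_iff_forall_notMem.1 hz) z ⟨hcs z.2, le_rfl⟩

theorem exists_isClopen_of_connectedComponent_subset {α : Type*} [TopologicalSpace α]
    [T2Space α] [CompactSpace α] {x : α} {U : Set α} (hU : IsOpen U)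
    (h : connectedComponent x ⊆ U) : ∃ s, IsClopen s ∧ x ∈ s ∧ s ⊆ U := by
  obtain ⟨t, ht⟩ := hU.isClosed_compl.isCompact.elim_finite_subfamily_closed
    (fun s : {s : Set α // IsClopen s ∧ x ∈ s} => s.1) (fun s => s.2.1.isClosed) <| by
      rw [← connectedComponent_eq_iInter_isClopen, ← disjoint_iff_inter_eq_empty]
      exact disjoint_compl_left_iff_subset.2 h
  refine ⟨⋂ s ∈ t, s.1, isClopen_biInter_finset fun s _ => s.2.1,
    mem_iInter₂.2 fun s _ => s.2.2, ?_⟩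
  rwa [← disjoint_compl_left_iff_subset, disjoint_iff_inter_eq_empty]

theorem isClosed_connectedComponentIn {α : Type*} [TopologicalSpace α] {F : Set α}
    (hF : IsClosed F) (x : α) : IsClosed (connectedComponentIn F x) := by
  by_cases hx : x ∈ F
  · refine closure_subset_iff_isClosed.1 <|
      isPreconnected_connectedComponentIn.closure.subset_connectedComponentIn
        (subset_closure (mem_connectedComponentIn hx))
        (closure_minimal (connectedComponentIn_subset F x) hF)
  · rw [connectedComponentIn_eq_empty hx]
    exact isClosed_empty

/-- The boundary bumping theorem, relative to the continuum `Z`. -/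
theorem connectedComponentIn_inter_not_subset {α : Type*} [TopologicalSpace α]
    [T2Space α] {Z F U : Set α} (hZ : IsPreconnected Z) (hZc : IsCompact Z) (hF : IsClosed F)
    (hU : IsOpen U) (hUF : Z ∩ U ⊆ F) (hZF : ¬ Z ⊆ F) {x : α} (hx : x ∈ Z ∩ U) :
    ¬ connectedComponentIn (Z ∩ F) x ⊆ U := by
  intro hsub
  have hxF : x ∈ Z ∩ F := ⟨hx.1, hUF hx⟩
  have : CompactSpace (Z ∩ F : Set α) := isCompact_iff_compactSpace.1 (hZc.inter_right hF)
  rw [connectedComponentIn_eq_image hxF, image_subset_iff] at hsub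
  obtain ⟨s, hs, hxs, hsU⟩ :=
    exists_isClopen_of_connectedComponent_subset (hU.preimage continuous_subtype_val) hsub
  obtain ⟨G, hG, rfl⟩ := isOpen_induced_iff.1 hs.isOpen
  set t : Set α := Subtype.val '' (Subtype.val ⁻¹' G : Set (Z ∩ F : Set α))
  have htc : IsClosed t := (hs.isClosed.isCompact.image continuous_subtype_val).isClosed
  have hcover : Z ⊆ (U ∩ G) ∪ tᶜ := fun z _ => by
    by_cases hzt : z ∈ t
    · obtain ⟨w, hw, rfl⟩ := hzt
      exact Or.inl ⟨hsU hw, hw⟩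
    · exact Or.inr hzt
  have hdisj : Z ∩ ((U ∩ G) ∩ tᶜ) = ∅ :=
    eq_empty_of_forall_notMem fun z ⟨hzZ, ⟨hzU, hzG⟩, hzt⟩ =>
      hzt ⟨⟨z, hzZ, hUF ⟨hzZ, hzU⟩⟩, hzG, rfl⟩
  rcases isPreconnected_iff_subset_of_disjoint.1 hZ _ _ (hU.inter hG) htc.isOpen_compl hcover
    hdisj with h | h
  · exact hZF fun z hz => hUF ⟨hz, (h hz).1⟩
  · exact h hx.1 ⟨⟨x, hxF⟩, hxs, rfl⟩

theorem exists_pos_preimage_Iio_subset {K : Type*} [TopologicalSpace K] [CompactSpace K]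
    {f : K → ℝ} (hf : Continuous f) {O : Set K} (hO : IsOpen O) (h : f ⁻¹' Iic 0 ⊆ O) :
    ∃ ρ > 0, f ⁻¹' Iio ρ ⊆ O := by
  rcases (Oᶜ).eq_empty_or_nonempty with hOc | hOc
  · exact ⟨1, one_pos, (compl_empty_iff.1 hOc).symm ▸ subset_univ _⟩
  obtain ⟨y, hyO, hmin⟩ := hO.isClosed_compl.isCompact.exists_isMinOn hOc hf.continuousOn
  refine ⟨f y, lt_of_not_ge fun hy => hyO (h hy), fun x hx => ?_⟩
  by_contra hxO
  have hyx : f y ≤ f x := hmin hxO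
  exact hyx.not_gt hx

theorem Metric.le_hausdorffDist_iff {α : Type*} [PseudoMetricSpace α] {s t : Set α}
    (hs : IsCompact s) (ht : IsCompact t) (hs' : s.Nonempty) (ht' : t.Nonempty) {r : ℝ} :
    r ≤ hausdorffDist s t ↔ (∃ x ∈ s, r ≤ infDist x t) ∨ ∃ y ∈ t, r ≤ infDist y s := by
  have hfin := hausdorffEDist_ne_top_of_nonempty_of_bounded hs' ht' hs.isBounded ht.isBounded
  refine ⟨fun hr => ?_, ?_⟩
  · by_contra! h
    obtain ⟨x, hx, hxmax⟩ := hs.exists_isMaxOn hs' (continuous_infDist_pt t).continuousOn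
    obtain ⟨y, hy, hymax⟩ := ht.exists_isMaxOn ht' (continuous_infDist_pt s).continuousOn
    have : hausdorffDist s t ≤ max (infDist x t) (infDist y s) :=
      hausdorffDist_le_of_infDist (le_max_of_le_left infDist_nonneg)
        (fun x' hx' => (hxmax hx').trans (le_max_left _ _))
        (fun y' hy' => (hymax hy').trans (le_max_right _ _))
    exact (hr.trans this).not_gt (max_lt (h.1 x hx) (h.2 y hy))
  · rintro (⟨x, hx, h⟩ | ⟨y, hy, h⟩)
    · exact h.trans (infDist_le_hausdorffDist_of_mem hx hfin)
    · rw [hausdorffDist_comm]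
      exact h.trans (infDist_le_hausdorffDist_of_mem hy (by rwa [hausdorffEDist_comm]))

theorem Set.image_compl_eq_of_preimage_image {α β : Type*} {f : α → β}
    (hf : Function.Surjective f) {s : Set α} (hs : f ⁻¹' (f '' s) = s) : f '' sᶜ = (f '' s)ᶜ := by
  conv_lhs => rw [← hs, ← preimage_compl, image_preimage_eq _ hf]

namespace TopologicalSpace.NonemptyCompacts

variable {α : Type*} [TopologicalSpace α] [T2Space α]

theorem isClosed_setOf_isPreconnected :
    IsClosed {K : NonemptyCompacts α | IsPreconnected (K : Set α)} := by
  refine isOpen_compl_iff.1 (isOpen_iff_forall_mem_open.2 fun K hK => ?_)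
  obtain ⟨u, v, hu, hv, hKuv, hKuv', hKu, hKv⟩ : ∃ u v, IsClosed u ∧ IsClosed v ∧
      (K : Set α) ⊆ u ∪ v ∧ (K : Set α) ∩ (u ∩ v) = ∅ ∧ ¬ (K : Set α) ⊆ u ∧ ¬ (K : Set α) ⊆ v := by
    simpa [isPreconnected_iff_subset_of_disjoint_closed, not_or] using hK
  obtain ⟨U, V, hU, hV, hKU, hKV, hUV⟩ :=
    SeparatedNhds.of_isCompact_isCompact (K.isCompact.inter_right hu) (K.isCompact.inter_right hv)
      (by rwa [disjoint_iff_inter_eq_empty, ← inter_inter_distrib_left])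
  refine ⟨{L | (L : Set α) ⊆ U ∪ V} ∩ {L | ((L : Set α) ∩ U).Nonempty} ∩
    {L | ((L : Set α) ∩ V).Nonempty}, ?_, ?_, ?_⟩
  · rintro L ⟨⟨hL, hLU⟩, hLV⟩ hpre
    obtain ⟨y, -, hyU, hyV⟩ := hpre U V hU hV hL hLU hLV
    exact disjoint_left.1 hUV hyU hyV
  · exact ((isOpen_subsets_of_isOpen (hU.union hV)).inter
      (isOpen_inter_nonempty_of_isOpen hU)).inter (isOpen_inter_nonempty_of_isOpen hV)
  · obtain ⟨x, hxK, hxv⟩ := not_subset.1 hKv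
    obtain ⟨y, hyK, hyu⟩ := not_subset.1 hKu
    refine ⟨⟨fun z hz => (hKuv hz).elim (fun h => Or.inl (hKU ⟨hz, h⟩))
      (fun h => Or.inr (hKV ⟨hz, h⟩)), ?_⟩, ?_⟩
    · exact ⟨x, hxK, hKU ⟨hxK, (hKuv hxK).resolve_right hxv⟩⟩
    · exact ⟨y, hyK, hKV ⟨hyK, (hKuv hyK).resolve_left hyu⟩⟩

instance : OrderClosedTopology (NonemptyCompacts α) where
  isClosed_le' := by
    refine isOpen_compl_iff.1 (isOpen_iff_forall_mem_open.2 fun KL hKL => ?_)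
    obtain ⟨x, hxK, hxL⟩ := not_subset.1 hKL
    obtain ⟨U, V, hU, hV, hxU, hLV, hUV⟩ := SeparatedNhds.of_isCompact_isCompact
      isCompact_singleton KL.2.isCompact (disjoint_singleton_left.2 hxL)
    refine ⟨{K : NonemptyCompacts α | ((K : Set α) ∩ U).Nonempty} ×ˢ
      {L : NonemptyCompacts α | (L : Set α) ⊆ V}, ?_,
      (isOpen_inter_nonempty_of_isOpen hU).prod (isOpen_subsets_of_isOpen hV),
      ⟨x, hxK, hxU rfl⟩, hLV⟩
    rintro ⟨K', L'⟩ ⟨⟨y, hyK', hyU⟩, hL'V⟩ hle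
    exact disjoint_left.1 hUV hyU (hL'V (hle hyK'))

end TopologicalSpace.NonemptyCompacts

def IsColocallyConnectedAt {Y : Type*} [TopologicalSpace Y] (y : Y) : Prop :=
  ∀ U : Set Y, IsOpen U → y ∈ U → ∃ V : Set Y, IsOpen V ∧ y ∈ V ∧ V ⊆ U ∧ IsConnected Vᶜ

def mkHyp (s : Set X) (hc : IsCompact s) (hs : IsConnected s) : Hyp X :=
  ⟨⟨⟨s, hc⟩, hs.nonempty⟩, hs⟩

namespace Hyp

instance [CompactSpace X] : CompactSpace (Hyp X) := by
  have : {K : NonemptyCompacts X | IsConnected (K : Set X)} =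
      {K : NonemptyCompacts X | IsPreconnected (K : Set X)} := by
    ext K
    exact and_iff_right K.nonempty
  exact isCompact_iff_compactSpace.1
    (this ▸ NonemptyCompacts.isClosed_setOf_isPreconnected).isCompact

theorem singHyp_le {x : X} {B : Hyp X} (hx : x ∈ (B.1 : Set X)) : singHyp x ≤ B :=
  singleton_subset_iff.2 hx

theorem continuous_singHyp : Continuous (singHyp : X → Hyp X) :=
  (NonemptyCompacts.continuous_singleton (α := X)).subtype_mk fun _ => isConnected_singleton

theorem infDist_le_dist {x : X} {B : Hyp X} (hx : x ∈ (B.1 : Set X)) (A : Hyp X) :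
    infDist x A.1 ≤ dist B A :=
  infDist_le_hausdorffDist_of_mem hx <| hausdorffEDist_ne_top_of_nonempty_of_bounded
    B.1.nonempty A.1.nonempty B.1.isCompact.isBounded A.1.isCompact.isBounded

/-- `G` is the component of `{x ∈ Z | infDist x M ≤ δ}` containing `M`; by boundary bumping it
reaches distance `δ` from `M`. -/
theorem exists_lt_le_dist_lt {M Z : Hyp X} (hMZ : M < Z) {ε : ℝ} (hε : 0 < ε) :
    ∃ G, M < G ∧ G ≤ Z ∧ dist G M < ε := by
  obtain ⟨e, heZ, heM⟩ := exists_of_ssubset (hMZ : (M : Set X) ⊂ Z)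
  have he : 0 < infDist e M := (M.1.isCompact.isClosed.notMem_iff_infDist_pos M.1.nonempty).1 heM
  obtain ⟨δ, hδ, hδε, hδe⟩ : ∃ δ, 0 < δ ∧ δ < ε ∧ δ < infDist e M :=
    ⟨min (ε / 2) (infDist e M / 2), by positivity,
      (min_le_left _ _).trans_lt (half_lt_self hε), (min_le_right _ _).trans_lt (half_lt_self he)⟩
  obtain ⟨m, hm⟩ := M.1.nonempty
  set F := {x : X | infDist x M ≤ δ}
  have hF : IsClosed F := isClosed_le (continuous_infDist_pt _) continuous_const
  set K := connectedComponentIn ((Z : Set X) ∩ F) m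
  have hMU : ∀ x ∈ (M : Set X), infDist x M < δ := fun x hx => by
    rwa [infDist_zero_of_mem hx]
  have hMF : (M : Set X) ⊆ F := fun x hx => (hMU x hx).le
  have hMK : (M : Set X) ⊆ K := M.2.2.subset_connectedComponentIn hm (subset_inter hMZ.le hMF)
  have hKZ : K ⊆ Z := (connectedComponentIn_subset _ _).trans inter_subset_left
  have hKc : IsCompact K := Z.1.isCompact.of_isClosed_subset
    (isClosed_connectedComponentIn (Z.1.isCompact.isClosed.inter hF) m) hKZ
  have hKconn : IsConnected K := isConnected_connectedComponentIn_iff.2 ⟨hMZ.le hm, hMF hm⟩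
  have hbump : ¬ K ⊆ {x : X | infDist x M < δ} :=
    connectedComponentIn_inter_not_subset Z.2.2 Z.1.isCompact hF
      (isOpen_lt (continuous_infDist_pt _) continuous_const)
      (fun x hx => le_of_lt (a := infDist x (M : Set X)) hx.2)
      (fun h => (h heZ).not_gt hδe) ⟨hMZ.le hm, hMU m hm⟩
  refine ⟨mkHyp K hKc hKconn, lt_of_le_of_ne hMK fun h => hbump fun x hx => hMU x (h ▸ hx),
    hKZ, ?_⟩
  · refine (hausdorffDist_le_of_infDist hδ.le (fun x hx => ?_) fun x hx => ?_).trans_lt hδε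
    · exact (connectedComponentIn_subset _ _ hx).2
    · change infDist x K ≤ δ
      rw [infDist_zero_of_mem (hMK hx)]
      exact hδ.le

theorem compl_ball_eq (A : Hyp X) (ε : ℝ) : (ball A ε)ᶜ =
    {B : Hyp X | ∃ b ∈ (B : Set X), ε ≤ infDist b A} ∪
      {B : Hyp X | ∃ a ∈ (A : Set X), ε ≤ infDist a B} := by
  ext B
  exact not_lt.trans (le_hausdorffDist_iff B.1.isCompact A.1.isCompact B.1.nonempty A.1.nonempty)

section Compact

variable [CompactSpace X]

/-- A maximal element of `Icc B Z ∩ u` (Zorn) would lie strictly below `Z`, and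
`exists_lt_le_dist_lt` would enlarge it without reaching the closed set `v`. -/
theorem Icc_subset_of_right_mem {B Z : Hyp X} {u v : Set (Hyp X)} (hu : IsClosed u)
    (hv : IsClosed v) (hcover : Icc B Z ⊆ u ∪ v) (hdisj : Icc B Z ∩ (u ∩ v) = ∅) (hZ : Z ∈ v) :
    Icc B Z ⊆ v := by
  intro C hC
  by_contra hCv
  obtain ⟨M, -, hMmax⟩ :=
    (isClosed_Icc.inter hu).isCompact.exists_le_maximal ⟨hC, (hcover hC).resolve_right hCv⟩
  obtain ⟨⟨hBM, hMZ⟩, hMu⟩ := hMmax.prop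
  have hMv : M ∉ v := fun h => (eq_empty_iff_forall_notMem.1 hdisj) M ⟨⟨hBM, hMZ⟩, hMu, h⟩
  obtain ⟨ε, hε, hball⟩ := Metric.isOpen_iff.1 hv.isOpen_compl M hMv
  obtain ⟨G, hMG, hGZ, hGM⟩ :=
    exists_lt_le_dist_lt (lt_of_le_of_ne hMZ fun h => hMv (h ▸ hZ)) hε
  have hG : G ∈ Icc B Z := ⟨hBM.trans hMG.le, hGZ⟩
  exact hMG.not_ge (hMmax.2 ⟨hG, (hcover hG).resolve_right (hball (mem_ball.2 hGM))⟩ hMG.le)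

theorem isPreconnected_Icc (B Z : Hyp X) : IsPreconnected (Icc B Z) := by
  rw [isPreconnected_iff_subset_of_disjoint_closed]
  intro u v hu hv hcover hdisj
  by_cases hBZ : B ≤ Z
  · rcases hcover (right_mem_Icc.2 hBZ) with hZ | hZ
    · rw [union_comm] at hcover
      rw [inter_comm u v] at hdisj
      exact Or.inl (Icc_subset_of_right_mem hv hu hcover hdisj hZ)
    · exact Or.inr (Icc_subset_of_right_mem hu hv hcover hdisj hZ)
  · simp [Icc_eq_empty hBZ]

theorem isPreconnected_Iic (Y : Hyp X) : IsPreconnected (Iic Y) :=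
  isPreconnected_of_forall Y fun B hB =>
    ⟨Icc B Y, Icc_subset_Iic_self, right_mem_Icc.2 hB, left_mem_Icc.2 hB, isPreconnected_Icc B Y⟩

variable [ConnectedSpace X]

theorem isPreconnected_of_isUpperSet {S : Set (Hyp X)} (hS : IsUpperSet S) : IsPreconnected S :=
  let T := mkHyp univ isCompact_univ isConnected_univ
  isPreconnected_of_forall T fun B hB =>
    ⟨Icc B T, fun _ hC => hS hC.1 hB, right_mem_Icc.2 (subset_univ _),
      left_mem_Icc.2 (subset_univ _), isPreconnected_Icc B T⟩

theorem isPreconnected_of_isLowerSet {S : Set (Hyp X)} (hS : IsLowerSet S)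
    (hsing : ∀ x, singHyp x ∈ S) : IsPreconnected S := by
  refine isPreconnected_of_forall (singHyp (Classical.arbitrary X)) fun B hB => ?_
  obtain ⟨b, hb⟩ := B.1.nonempty
  refine ⟨range singHyp ∪ Icc (singHyp b) B, union_subset (range_subset_iff.2 hsing)
    fun _ hC => hS hC.2 hB, Or.inl (mem_range_self _), Or.inr (right_mem_Icc.2 (singHyp_le hb)),
    (isPreconnected_range continuous_singHyp).union (singHyp b) (mem_range_self _)
      (left_mem_Icc.2 (singHyp_le hb)) (isPreconnected_Icc _ _)⟩

theorem isPreconnected_compl_ball_of_subsingleton {A : Hyp X} (hA : (A : Set X).Subsingleton)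
    (ε : ℝ) : IsPreconnected (ball A ε)ᶜ := by
  rw [compl_ball_eq, union_eq_left.2]
  · exact isPreconnected_of_isUpperSet fun B C hBC ⟨b, hb, h⟩ => ⟨b, hBC hb, h⟩
  rintro B ⟨a, ha, h⟩
  obtain ⟨b, hb⟩ := B.1.nonempty
  refine ⟨b, hb, ?_⟩
  rw [hA.eq_singleton_of_mem ha, infDist_singleton, dist_comm]
  exact h.trans (infDist_le_dist_of_mem hb)

theorem isPreconnected_compl_ball_of_forall {A : Hyp X} {ε : ℝ}
    (hA : ∀ x, ∃ a ∈ (A : Set X), ε ≤ dist a x) : IsPreconnected (ball A ε)ᶜ := by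
  have hsing : ∀ x, singHyp x ∈ {B : Hyp X | ∃ a ∈ (A : Set X), ε ≤ infDist a B} := fun x => by
    obtain ⟨a, ha, h⟩ := hA x
    exact ⟨a, ha, by rwa [show ((singHyp x : Hyp X) : Set X) = {x} from rfl, infDist_singleton]⟩
  have hlow : IsPreconnected {B : Hyp X | ∃ a ∈ (A : Set X), ε ≤ infDist a B} :=
    isPreconnected_of_isLowerSet (fun B C hCB ⟨a, ha, h⟩ =>
      ⟨a, ha, h.trans (infDist_le_infDist_of_subset hCB C.1.nonempty)⟩) hsing
  have hup : IsPreconnected {B : Hyp X | ∃ b ∈ (B : Set X), ε ≤ infDist b A} :=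
    isPreconnected_of_isUpperSet fun B C hBC ⟨b, hb, h⟩ => ⟨b, hBC hb, h⟩
  rw [compl_ball_eq]
  rcases eq_empty_or_nonempty {B : Hyp X | ∃ b ∈ (B : Set X), ε ≤ infDist b A} with
    h | ⟨B, b, hb, h⟩
  · rwa [h, empty_union]
  · exact hup.union (singHyp b) ⟨b, mem_singleton b, h⟩ (hsing b) hlow

end Compact

end Hyp

theorem hsMk_surjective (p : X) : Function.Surjective (hsMk p) :=
  Quotient.mk_surjective

theorem isQuotientMap_hsMk (p : X) : IsQuotientMap (hsMk p) :=
  isQuotientMap_quotient_mk'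

theorem hsMk_eq_of_mem {p : X} {A B : Hyp X} (hA : A ∈ CpSet p) (hB : B ∈ CpSet p) :
    hsMk p A = hsMk p B :=
  Quotient.sound (Or.inr ⟨hA, hB⟩)

theorem preimage_hsMk_image {p : X} {V : Set (Hyp X)}
    (hV : CpSet p ⊆ V ∨ Disjoint V (CpSet p)) : hsMk p ⁻¹' (hsMk p '' V) = V := by
  refine (subset_preimage_image _ _).antisymm' fun B ⟨A, hA, hAB⟩ => ?_
  rcases Quotient.exact hAB with rfl | ⟨hAp, hBp⟩
  · exact hA
  · exact hV.elim (fun h => h hBp) fun h => absurd hAp (disjoint_left.1 h hA)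

theorem exists_isOpen_isConnected_compl_of_CpSet_subset [CompactSpace X] {p : X}
    (hp : IsColocallyConnectedAt p) {O : Set (Hyp X)} (hO : IsOpen O) (hpO : CpSet p ⊆ O) :
    ∃ V, IsOpen V ∧ CpSet p ⊆ V ∧ V ⊆ O ∧ IsConnected Vᶜ := by
  obtain ⟨ρ, hρ, hρO⟩ := exists_pos_preimage_Iio_subset
    ((lipschitz_infDist_set p).continuous.comp continuous_subtype_val) hO fun B hB =>
      hpO <| (B.1.isCompact.isClosed.mem_iff_infDist_zero B.1.nonempty).2
        (hB.antisymm infDist_nonneg)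
  obtain ⟨W, hW, hpW, hWρ, hWc⟩ := hp (ball p ρ) isOpen_ball (mem_ball_self hρ)
  refine ⟨{B | ((B : Set X) ∩ W).Nonempty},
    (NonemptyCompacts.isOpen_inter_nonempty_of_isOpen hW).preimage continuous_subtype_val,
    fun B hB => ⟨p, hB, hpW⟩, fun B ⟨x, hxB, hxW⟩ => hρO ?_, ?_⟩
  · exact (infDist_le_dist_of_mem hxB).trans_lt (by simpa [dist_comm] using hWρ hxW)
  · let Y := mkHyp Wᶜ hW.isClosed_compl.isCompact hWc
    have : {B : Hyp X | ((B : Set X) ∩ W).Nonempty}ᶜ = Iic Y := by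
      ext B
      exact not_nonempty_iff_eq_empty.trans
        (disjoint_iff_inter_eq_empty.symm.trans subset_compl_iff_disjoint_right.symm)
    rw [this]
    exact ⟨nonempty_Iic, Hyp.isPreconnected_Iic Y⟩

theorem exists_ball_subset_isConnected_compl [CompactSpace X] [ConnectedSpace X] {p : X}
    {A : Hyp X} (hpA : A ∉ CpSet p) {O : Set (Hyp X)} (hO : IsOpen O) (hAO : A ∈ O) :
    ∃ ε > 0, ball A ε ⊆ O ∧ Disjoint (ball A ε) (CpSet p) ∧ IsConnected (ball A ε)ᶜ := by
  have hp : 0 < infDist p A := (A.1.isCompact.isClosed.notMem_iff_infDist_pos A.1.nonempty).1 hpA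
  obtain ⟨ε₀, hε₀, hAO⟩ := Metric.isOpen_iff.1 hO A hAO
  obtain ⟨ε, hε, hεε₀, hεp, hconn⟩ : ∃ ε > 0, ε ≤ ε₀ ∧ ε ≤ infDist p A ∧
      IsPreconnected (ball A ε)ᶜ := by
    rcases (A : Set X).subsingleton_or_nontrivial with hA | ⟨a, ha, b, hb, hab⟩
    · exact ⟨min ε₀ (infDist p A), lt_min hε₀ hp, min_le_left _ _, min_le_right _ _,
        Hyp.isPreconnected_compl_ball_of_subsingleton hA _⟩
    · refine ⟨min (min ε₀ (infDist p A)) (dist a b / 2), lt_min (lt_min hε₀ hp)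
        (half_pos (dist_pos.2 hab)), (min_le_left _ _).trans (min_le_left _ _),
        (min_le_left _ _).trans (min_le_right _ _),
        Hyp.isPreconnected_compl_ball_of_forall fun x => ?_⟩
      have := dist_triangle_right a b x
      by_cases hax : dist b x ≤ dist a x
      · exact ⟨a, ha, (min_le_right _ _).trans (by linarith)⟩
      · exact ⟨b, hb, (min_le_right _ _).trans (by linarith)⟩
  have hfar : ∀ B : Hyp X, B ∈ CpSet p → B ∉ ball A ε := fun B hB hBA =>
    (mem_ball.1 hBA).not_ge (hεp.trans (Hyp.infDist_le_dist hB A))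
  refine ⟨ε, hε, (ball_subset_ball hεε₀).trans hAO, disjoint_right.2 hfar, ?_, hconn⟩
  exact ⟨mkHyp univ isCompact_univ isConnected_univ, hfar _ (mem_univ p)⟩

theorem stmt18_general [CompactSpace X] [ConnectedSpace X] (p : X)
    (h : ∀ U : Set X, IsOpen U → p ∈ U →
      ∃ V : Set X, IsOpen V ∧ p ∈ V ∧ V ⊆ U ∧ IsConnected (Vᶜ : Set X)) :
    ∀ z : HS p, ∀ U : Set (HS p), IsOpen U → z ∈ U →
      ∃ V : Set (HS p), IsOpen V ∧ z ∈ V ∧ V ⊆ U ∧ IsConnected (Vᶜ : Set (HS p)) := by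
  intro z U hU hz
  obtain ⟨A, rfl⟩ := hsMk_surjective p z
  have hO : IsOpen (hsMk p ⁻¹' U) := hU.preimage (isQuotientMap_hsMk p).continuous
  obtain ⟨V, hV, hAV, hVU, hVc, hsat⟩ : ∃ V : Set (Hyp X), IsOpen V ∧ A ∈ V ∧
      V ⊆ hsMk p ⁻¹' U ∧ IsConnected Vᶜ ∧ (CpSet p ⊆ V ∨ Disjoint V (CpSet p)) := by
    by_cases hA : A ∈ CpSet p
    · obtain ⟨V, hV, hpV, hVU, hVc⟩ :=
        exists_isOpen_isConnected_compl_of_CpSet_subset h hO fun B hB => by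
          rwa [mem_preimage, hsMk_eq_of_mem hB hA]
      exact ⟨V, hV, hpV hA, hVU, hVc, Or.inl hpV⟩
    · obtain ⟨ε, hε, hεU, hεp, hεc⟩ := exists_ball_subset_isConnected_compl hA hO hz
      exact ⟨ball A ε, isOpen_ball, mem_ball_self hε, hεU, hεc, Or.inr hεp⟩
  refine ⟨hsMk p '' V, ?_, mem_image_of_mem _ hAV, image_subset_iff.2 hVU, ?_⟩
  · rwa [← (isQuotientMap_hsMk p).isOpen_preimage, preimage_hsMk_image hsat]
  · rw [← image_compl_eq_of_preimage_image (hsMk_surjective p) (preimage_hsMk_image hsat)]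
    exact hVc.image _ (isQuotientMap_hsMk p).continuous.continuousOn

theorem stmt18 [CompactSpace X] [ConnectedSpace X] [Nontrivial X] (p : X)
    (h : ∀ U : Set X, IsOpen U → p ∈ U →
      ∃ V : Set X, IsOpen V ∧ p ∈ V ∧ V ⊆ U ∧ IsConnected (Vᶜ : Set X)) :
    ∀ z : HS p, ∀ U : Set (HS p), IsOpen U → z ∈ U →
      ∃ V : Set (HS p), IsOpen V ∧ z ∈ V ∧ V ⊆ U ∧ IsConnected (Vᶜ : Set (HS p)) :=
  stmt18_general p h
end
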